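/- arXiv:1603.07170 — 3 statements merged into one kernel-verified Lean document; each statement's English description precedes it below -/
import Mathlib

section
/- For a convex function f : [a,b] → ℝ with a < b, the average of f over [a,b] is at most (1/2)·(f((a+b)/2) + (f(a)+f(b))/2). -/
/-!
Split `[a, b]` at its midpoint `m`. On each half, convexity puts `f` below its chord, whose
integral is the trapezoid `(length) · (mean of the endpoint values)`; adding the two trapezoids
gives `(b - a)/4 · (f a + 2 f m + f b)`.
-/

open MeasureTheory Set

theorem ConvexOn.le_secant {𝕜 : Type*} [Field 𝕜] [LinearOrder 𝕜] [IsStrictOrderedRing 𝕜]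
    {s : Set 𝕜} {f : 𝕜 → 𝕜} (hf : ConvexOn 𝕜 s f) {c d t : 𝕜} (hc : c ∈ s) (hd : d ∈ s)
    (hct : c ≤ t) (htd : t ≤ d) (hcd : c < d) :
    f t ≤ ((d - t) * f c + (t - c) * f d) / (d - c) := by
  have hdc : d - c ≠ 0 := (sub_pos.2 hcd).ne'
  have ht : (d - t) / (d - c) * c + (t - c) / (d - c) * d = t := by field_simp; ring
  calc f t = f ((d - t) / (d - c) * c + (t - c) / (d - c) * d) := by rw [ht]
    _ ≤ (d - t) / (d - c) * f c + (t - c) / (d - c) * f d :=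
        hf.2 hc hd (div_nonneg (sub_nonneg.2 htd) (sub_pos.2 hcd).le)
          (div_nonneg (sub_nonneg.2 hct) (sub_pos.2 hcd).le) (by field_simp; ring)
    _ = ((d - t) * f c + (t - c) * f d) / (d - c) := by ring

theorem integral_secant {c d : ℝ} (hcd : c ≠ d) (u v : ℝ) :
    ∫ t in c..d, ((d - t) * u + (t - c) * v) / (d - c) = (d - c) * (u + v) / 2 := by
  have hdc : d - c ≠ 0 := sub_ne_zero.2 hcd.symm
  have hsecant_affine (t : ℝ) : ((d - t) * u + (t - c) * v) / (d - c) =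
      (v - u) / (d - c) * t + (d * u - c * v) / (d - c) := by
    field_simp; ring
  simp only [hsecant_affine]
  rw [intervalIntegral.integral_add (intervalIntegral.intervalIntegrable_id.const_mul _)
    intervalIntegrable_const, intervalIntegral.integral_const_mul, integral_id,
    intervalIntegral.integral_const, smul_eq_mul]
  field_simp
  ring

theorem ConvexOn.intervalIntegral_le_trapezoid {f : ℝ → ℝ} {c d : ℝ} (hcd : c ≤ d)
    (hf : ConvexOn ℝ (Icc c d) f) (hint : IntervalIntegrable f volume c d) :
    ∫ t in c..d, f t ≤ (d - c) * (f c + f d) / 2 := by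
  rcases hcd.eq_or_lt with rfl | hcd
  · simp
  rw [← integral_secant hcd.ne]
  refine intervalIntegral.integral_mono_on hcd.le hint
    (Continuous.intervalIntegrable (by fun_prop) c d) fun t ht ↦ ?_
  exact hf.le_secant (left_mem_Icc.2 hcd.le) (right_mem_Icc.2 hcd.le) ht.1 ht.2 hcd

theorem ConvexOn.intervalIntegral_le_trapezoid_split {f : ℝ → ℝ} {a m b : ℝ} (ham : a ≤ m)
    (hmb : m ≤ b) (hf : ConvexOn ℝ (Icc a b) f) (hint : IntervalIntegrable f volume a b) :
    ∫ t in a..b, f t ≤ (m - a) * (f a + f m) / 2 + (b - m) * (f m + f b) / 2 := by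
  have hm : m ∈ uIcc a b := uIcc_of_le (ham.trans hmb) ▸ ⟨ham, hmb⟩
  have hint_left := hint.mono_set (uIcc_subset_uIcc_left hm)
  have hint_right := hint.mono_set (uIcc_subset_uIcc_right hm)
  rw [← intervalIntegral.integral_add_adjacent_intervals hint_left hint_right]
  gcongr
  · exact (hf.subset (Icc_subset_Icc le_rfl hmb) (convex_Icc a m)).intervalIntegral_le_trapezoid
      ham hint_left
  · exact (hf.subset (Icc_subset_Icc ham le_rfl) (convex_Icc m b)).intervalIntegral_le_trapezoid
      hmb hint_right

theorem hermite_hadamard_right_strong (a b : ℝ) (hab : a < b) (f : ℝ → ℝ)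
    (hf : ConvexOn ℝ (Set.Icc a b) f)
    (hint : IntegrableOn f (Set.Icc a b)) :
    (1 / (b - a)) * ∫ t in a..b, f t ≤
      (1 / 2) * (f ((a + b) / 2) + (f a + f b) / 2) := by
  have hsplit := hf.intervalIntegral_le_trapezoid_split (m := (a + b) / 2) (by linarith)
    (by linarith) ((intervalIntegrable_iff_integrableOn_Icc_of_le hab.le).2 hint)
  rw [one_div_mul_eq_div, div_le_iff₀ (sub_pos.2 hab)]
  linarith
end

section
/- Let Δ ⊂ ℝⁿ be an n-simplex with vertices x₀,…,xₙ and barycenter b. If f : Δ → ℝ is convex, then f(b) ≤ (1/Vol Δ)·∫_Δ f ≤ (f(x₀)+⋯+f(xₙ))/(n+1). -/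
/-! The affine automorphisms of the simplex that permute its vertices map it onto itself, so
they preserve Lebesgue measure on it. Averaging over them, every barycentric coordinate has mean
`1 / (n + 1)` on the simplex, and integrating Jensen's bound `f y ≤ ∑ λᵢ(y) f(xᵢ)` gives the upper
estimate. For the lower one, the images of any point `y` under these automorphisms average to the
barycenter, so Jensen's inequality at the barycenter, integrated in `y`, gives it. -/

open MeasureTheory Finset
open scoped ENNReal

theorem Fintype.card_nsmul_eq_sum_of_forall_eq {ι M : Type*} [Fintype ι] [AddCommMonoid M]
    {a : ι → M} (h : ∀ i j, a i = a j) (i : ι) : Fintype.card ι • a i = ∑ j, a j := by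
  rw [Fintype.sum_congr _ _ (fun j => h j i), sum_const, card_univ]

theorem Equiv.Perm.card_nsmul_sum_apply {ι M : Type*} [Fintype ι] [DecidableEq ι]
    [AddCommMonoid M] (g : ι → M) (i : ι) :
    Fintype.card ι • ∑ σ : Equiv.Perm ι, g (σ i) = Fintype.card (Equiv.Perm ι) • ∑ j, g j := by
  have hconst : ∀ i j, ∑ σ : Equiv.Perm ι, g (σ i) = ∑ σ : Equiv.Perm ι, g (σ j) := fun i j =>
    Fintype.sum_equiv (Equiv.mulRight (Equiv.swap i j)) _ _ fun σ => by simp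
  rw [Fintype.card_nsmul_eq_sum_of_forall_eq (a := fun i => ∑ σ : Equiv.Perm ι, g (σ i)) hconst i,
    sum_comm]
  simp_rw [Equiv.sum_comp]
  rw [sum_const, card_univ]

namespace AffineBasis

section Permute

variable {ι k V P : Type*} [Fintype ι] [Ring k] [AddCommGroup V] [Module k V] [AddTorsor V P]
  (b : AffineBasis ι k P)

noncomputable def permuteMap (σ : Equiv.Perm ι) : P →ᵃ[k] P :=
  (univ.affineCombination k b).comp ((LinearMap.funLeft k k σ.symm).toAffineMap.comp b.coords)

theorem coord_permuteMap (σ : Equiv.Perm ι) (i : ι) (y : P) :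
    b.coord i (b.permuteMap σ y) = b.coord (σ.symm i) y := by
  have hsum : ∑ j, b.coord (σ.symm j) y = 1 := by
    rw [Equiv.sum_comp σ.symm (fun j => b.coord j y)]
    exact b.sum_coord_apply_eq_one y
  exact b.coord_apply_combination_of_mem (mem_univ i) hsum

noncomputable def permute (σ : Equiv.Perm ι) : P ≃ᵃ[k] P :=
  AffineEquiv.ofBijective (φ := b.permuteMap σ) <| Function.bijective_iff_has_inverse.mpr
    ⟨b.permuteMap σ.symm, fun y => b.ext_elem fun i => by simp [coord_permuteMap],
      fun y => b.ext_elem fun i => by simp [coord_permuteMap]⟩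

@[simp]
theorem coord_permute (σ : Equiv.Perm ι) (i : ι) (y : P) :
    b.coord i (b.permute σ y) = b.coord (σ.symm i) y :=
  b.coord_permuteMap σ i y

@[simp]
theorem permute_apply_self (σ : Equiv.Perm ι) (j : ι) : b.permute σ (b j) = b (σ j) := by
  classical
  refine b.ext_elem fun i => ?_
  simp only [coord_permute, coord_apply, Equiv.symm_apply_eq]

end Permute

theorem permute_preimage_convexHull {ι V : Type*} [Fintype ι] [AddCommGroup V] [Module ℝ V]
    (b : AffineBasis ι ℝ V) (σ : Equiv.Perm ι) :
    b.permute σ ⁻¹' convexHull ℝ (Set.range b) = convexHull ℝ (Set.range b) := by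
  rw [← AffineEquiv.coe_toEquiv, Equiv.preimage_eq_iff_eq_image, AffineEquiv.coe_toEquiv,
    ← AffineEquiv.coe_toAffineMap, AffineMap.image_convexHull, ← Set.range_comp]
  have hcomp : ⇑(b.permute σ).toAffineMap ∘ b = b ∘ σ := funext (b.permute_apply_self σ)
  rw [hcomp, σ.surjective.range_comp]

theorem sum_inv_card_smul_permute {ι k V : Type*} [Fintype ι] [DecidableEq ι] [Field k]
    [CharZero k] [AddCommGroup V] [Module k V] (b : AffineBasis ι k V) (y : V) :
    ∑ σ : Equiv.Perm ι, (Fintype.card (Equiv.Perm ι) : k)⁻¹ • b.permute σ y =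
      (Fintype.card ι : k)⁻¹ • ∑ i, b i := by
  have := b.nonempty
  set N : k := (Fintype.card ι : k)
  set M : k := (Fintype.card (Equiv.Perm ι) : k)
  have hN : N ≠ 0 := Nat.cast_ne_zero.2 Fintype.card_ne_zero
  have hM : M ≠ 0 := Nat.cast_ne_zero.2 Fintype.card_ne_zero
  have hweight : ∀ i, M⁻¹ * ∑ σ : Equiv.Perm ι, b.coord (σ.symm i) y = N⁻¹ := by
    intro i
    have h := Equiv.Perm.card_nsmul_sum_apply (fun j => b.coord j y) i
    have hinv : ∑ σ : Equiv.Perm ι, b.coord (σ.symm i) y = ∑ σ : Equiv.Perm ι, b.coord (σ i) y :=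
      Fintype.sum_equiv (Equiv.inv _) _ _ fun _ => rfl
    rw [b.sum_coord_apply_eq_one, nsmul_eq_mul, nsmul_eq_mul, mul_one, ← hinv] at h
    field_simp
    linear_combination h
  calc ∑ σ : Equiv.Perm ι, M⁻¹ • b.permute σ y
      = ∑ σ : Equiv.Perm ι, M⁻¹ • ∑ i, b.coord (σ.symm i) y • b i := by
        simp_rw [← coord_permute, b.linear_combination_coord_eq_self]
    _ = ∑ i, (M⁻¹ * ∑ σ : Equiv.Perm ι, b.coord (σ.symm i) y) • b i := by
        simp_rw [smul_sum, smul_smul, mul_sum, sum_smul]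
        exact sum_comm
    _ = N⁻¹ • ∑ i, b i := by simp_rw [hweight, smul_sum]

end AffineBasis

theorem AffineEquiv.map_addHaar {E : Type*} [NormedAddCommGroup E] [NormedSpace ℝ E]
    [MeasurableSpace E] [BorelSpace E] [FiniteDimensional ℝ E] (μ : Measure E)
    [μ.IsAddHaarMeasure] (A : E ≃ᵃ[ℝ] E) :
    μ.map A = ENNReal.ofReal |(LinearMap.det (A.linear : E →ₗ[ℝ] E))⁻¹| • μ := by
  have hA : ⇑A = (· + A 0) ∘ (A.linear : E →ₗ[ℝ] E) := by
    ext y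
    simpa using congrFun (AffineMap.decomp A.toAffineMap) y
  rw [hA, ← Measure.map_map (measurable_add_const _)
    (A.linear : E →ₗ[ℝ] E).continuous_of_finiteDimensional.measurable,
    Measure.map_linearMap_addHaar_eq_smul_addHaar _ A.linear.isUnit_det'.ne_zero,
    Measure.map_smul, map_add_right_eq_self]

theorem AffineEquiv.measurePreserving_restrict {E : Type*} [NormedAddCommGroup E]
    [NormedSpace ℝ E] [MeasurableSpace E] [BorelSpace E] [FiniteDimensional ℝ E]
    (μ : Measure E) [μ.IsAddHaarMeasure] (A : E ≃ᵃ[ℝ] E) {s : Set E} (hs : MeasurableSet s)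
    (hs₀ : μ s ≠ 0) (hs_top : μ s ≠ ∞) (hAs : A ⁻¹' s = s) :
    MeasurePreserving A (μ.restrict s) (μ.restrict s) := by
  have hA : Measurable A := (A : E →ᵃ[ℝ] E).continuous_of_finiteDimensional.measurable
  have hdet : ENNReal.ofReal |(LinearMap.det (A.linear : E →ₗ[ℝ] E))⁻¹| = 1 := by
    have h := congrArg (· s) (A.map_addHaar μ)
    simp only [Measure.map_apply hA hs, hAs, Measure.smul_apply, smul_eq_mul] at h
    exact ((ENNReal.mul_left_inj hs₀ hs_top).1 (by rw [one_mul, ← h])).symm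
  have hpres : MeasurePreserving A μ μ := ⟨hA, by rw [A.map_addHaar μ, hdet, one_smul]⟩
  simpa only [hAs] using hpres.restrict_preimage hs

theorem ConvexOn.le_sum_coord_mul {ι V : Type*} [Fintype ι] [AddCommGroup V] [Module ℝ V]
    (b : AffineBasis ι ℝ V) {f : V → ℝ} (hf : ConvexOn ℝ (convexHull ℝ (Set.range b)) f) {y : V}
    (hy : y ∈ convexHull ℝ (Set.range b)) : f y ≤ ∑ i, b.coord i y * f (b i) := by
  rw [b.convexHull_eq_nonneg_coord] at hy
  simpa only [b.linear_combination_coord_eq_self, smul_eq_mul] using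
    hf.map_sum_le (t := univ) (fun i _ => hy i) (b.sum_coord_apply_eq_one y)
      (fun i _ => subset_convexHull ℝ _ (Set.mem_range_self i))

namespace AffineBasis

variable {ι E : Type*} [Fintype ι] [NormedAddCommGroup E] [NormedSpace ℝ E]
  (B : AffineBasis ι ℝ E)

theorem isCompact_convexHull : IsCompact (convexHull ℝ (Set.range B)) :=
  (Set.finite_range B).isCompact_convexHull (𝕜 := ℝ)

variable [MeasurableSpace E] (μ : Measure E) [μ.IsAddHaarMeasure]

theorem addHaar_convexHull_pos : 0 < μ (convexHull ℝ (Set.range B)) :=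
  Measure.measure_pos_of_nonempty_interior μ ⟨_, B.centroid_mem_interior_convexHull⟩

theorem measureReal_convexHull_pos : 0 < μ.real (convexHull ℝ (Set.range B)) :=
  ENNReal.toReal_pos (B.addHaar_convexHull_pos μ).ne' B.isCompact_convexHull.measure_lt_top.ne

variable [BorelSpace E] [FiniteDimensional ℝ E]

theorem measurePreserving_permute (σ : Equiv.Perm ι) :
    MeasurePreserving (B.permute σ) (μ.restrict (convexHull ℝ (Set.range B)))
      (μ.restrict (convexHull ℝ (Set.range B))) :=
  (B.permute σ).measurePreserving_restrict μ B.isCompact_convexHull.isClosed.measurableSet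
    (B.addHaar_convexHull_pos μ).ne' B.isCompact_convexHull.measure_lt_top.ne
    (B.permute_preimage_convexHull σ)

theorem measurableEmbedding_permute (σ : Equiv.Perm ι) : MeasurableEmbedding (B.permute σ) :=
  (B.permute σ).toContinuousAffineEquiv.toHomeomorph.measurableEmbedding

theorem setIntegral_comp_permute {F : Type*} [NormedAddCommGroup F] [NormedSpace ℝ F]
    (g : E → F) (σ : Equiv.Perm ι) :
    ∫ y in convexHull ℝ (Set.range B), g (B.permute σ y) ∂μ =
      ∫ y in convexHull ℝ (Set.range B), g y ∂μ :=
  (B.measurePreserving_permute μ σ).integral_comp (B.measurableEmbedding_permute σ) g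

theorem integrableOn_comp_permute_iff {F : Type*} [NormedAddCommGroup F] {g : E → F}
    (σ : Equiv.Perm ι) :
    IntegrableOn (g ∘ B.permute σ) (convexHull ℝ (Set.range B)) μ ↔
      IntegrableOn g (convexHull ℝ (Set.range B)) μ :=
  (B.measurePreserving_permute μ σ).integrable_comp_emb (B.measurableEmbedding_permute σ)

theorem integrableOn_coord (i : ι) : IntegrableOn (B.coord i) (convexHull ℝ (Set.range B)) μ :=
  (B.coord i).continuous_of_finiteDimensional.continuousOn.integrableOn_compact
    B.isCompact_convexHull

theorem setIntegral_coord (i : ι) :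
    ∫ y in convexHull ℝ (Set.range B), B.coord i y ∂μ =
      μ.real (convexHull ℝ (Set.range B)) / Fintype.card ι := by
  classical
  have hsymm : ∀ i j, ∫ y in convexHull ℝ (Set.range B), B.coord i y ∂μ =
      ∫ y in convexHull ℝ (Set.range B), B.coord j y ∂μ := fun i j => by
    rw [← B.setIntegral_comp_permute μ _ (Equiv.swap i j)]
    simp
  have hsum := Fintype.card_nsmul_eq_sum_of_forall_eq hsymm i
  rw [nsmul_eq_mul, ← integral_finsetSum _ fun j _ => B.integrableOn_coord μ j] at hsum
  simp only [B.sum_coord_apply_eq_one, integral_const, smul_eq_mul, mul_one,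
    measureReal_restrict_apply_univ] at hsum
  have : Nonempty ι := ⟨i⟩
  rw [eq_div_iff (Nat.cast_ne_zero.2 Fintype.card_ne_zero), ← hsum, mul_comm]

variable {B μ}

theorem _root_.ConvexOn.setAverage_convexHull_le {f : E → ℝ}
    (hf : ConvexOn ℝ (convexHull ℝ (Set.range B)) f)
    (hint : IntegrableOn f (convexHull ℝ (Set.range B)) μ) :
    ⨍ y in convexHull ℝ (Set.range B), f y ∂μ ≤ (∑ i, f (B i)) / Fintype.card ι := by
  have hbound : IntegrableOn (fun y => ∑ i, B.coord i y * f (B i))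
      (convexHull ℝ (Set.range B)) μ :=
    integrable_finsetSum _ fun i _ => (B.integrableOn_coord μ i).mul_const _
  rw [setAverage_eq, smul_eq_mul, inv_mul_le_iff₀ (B.measureReal_convexHull_pos μ)]
  calc ∫ y in convexHull ℝ (Set.range B), f y ∂μ
      ≤ ∫ y in convexHull ℝ (Set.range B), ∑ i, B.coord i y * f (B i) ∂μ :=
        setIntegral_mono_on hint hbound B.isCompact_convexHull.isClosed.measurableSet
          fun y hy => hf.le_sum_coord_mul B hy
    _ = μ.real (convexHull ℝ (Set.range B)) * ((∑ i, f (B i)) / Fintype.card ι) := by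
        rw [integral_finsetSum _ fun i _ => (B.integrableOn_coord μ i).mul_const _]
        simp_rw [integral_mul_const, setIntegral_coord, ← mul_sum]
        ring

theorem _root_.ConvexOn.map_smul_sum_le_setAverage_convexHull [DecidableEq ι] {f : E → ℝ}
    (hf : ConvexOn ℝ (convexHull ℝ (Set.range B)) f)
    (hint : IntegrableOn f (convexHull ℝ (Set.range B)) μ) :
    f ((Fintype.card ι : ℝ)⁻¹ • ∑ i, B i) ≤ ⨍ y in convexHull ℝ (Set.range B), f y ∂μ := by
  set M : ℝ := (Fintype.card (Equiv.Perm ι) : ℝ)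
  have hweights : ∑ _σ : Equiv.Perm ι, M⁻¹ = 1 := by
    rw [sum_const, card_univ, nsmul_eq_mul,
      mul_inv_cancel₀ (Nat.cast_ne_zero.2 Fintype.card_ne_zero)]
  have hjensen : ∀ y ∈ convexHull ℝ (Set.range B), f ((Fintype.card ι : ℝ)⁻¹ • ∑ i, B i) ≤
      ∑ σ : Equiv.Perm ι, M⁻¹ * f (B.permute σ y) := fun y hy => by
    rw [← B.sum_inv_card_smul_permute y]
    refine hf.map_sum_le (fun _ _ => by positivity) hweights fun σ _ => ?_
    rwa [← B.permute_preimage_convexHull σ] at hy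
  have hterm : ∀ σ : Equiv.Perm ι, IntegrableOn (fun y => M⁻¹ * f (B.permute σ y))
      (convexHull ℝ (Set.range B)) μ := fun σ =>
    ((B.integrableOn_comp_permute_iff μ σ).2 hint).const_mul _
  rw [setAverage_eq, smul_eq_mul, le_inv_mul_iff₀ (B.measureReal_convexHull_pos μ)]
  calc μ.real (convexHull ℝ (Set.range B)) * f ((Fintype.card ι : ℝ)⁻¹ • ∑ i, B i)
      = ∫ _ in convexHull ℝ (Set.range B), f ((Fintype.card ι : ℝ)⁻¹ • ∑ i, B i) ∂μ := by
        rw [setIntegral_const, smul_eq_mul]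
    _ ≤ ∫ y in convexHull ℝ (Set.range B), ∑ σ : Equiv.Perm ι, M⁻¹ * f (B.permute σ y) ∂μ :=
        setIntegral_mono_on (integrableOn_const B.isCompact_convexHull.measure_lt_top.ne)
          (integrable_finsetSum _ fun σ _ => hterm σ)
          B.isCompact_convexHull.isClosed.measurableSet hjensen
    _ = ∫ y in convexHull ℝ (Set.range B), f y ∂μ := by
        rw [integral_finsetSum _ fun σ _ => hterm σ]
        simp_rw [integral_const_mul, B.setIntegral_comp_permute μ f, ← sum_mul, hweights, one_mul]

end AffineBasis

theorem hermite_hadamard_simplex (n : ℕ)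
    (x : Fin (n + 1) → EuclideanSpace ℝ (Fin n))
    (hx : AffineIndependent ℝ x)
    (f : EuclideanSpace ℝ (Fin n) → ℝ)
    (hf : ConvexOn ℝ (convexHull ℝ (Set.range x)) f)
    (hint : IntegrableOn f (convexHull ℝ (Set.range x))) :
    f (((n : ℝ) + 1)⁻¹ • ∑ i, x i) ≤ ⨍ y in convexHull ℝ (Set.range x), f y ∧
      ⨍ y in convexHull ℝ (Set.range x), f y ≤ (∑ i, f (x i)) / ((n : ℝ) + 1) := by
  have hspan : affineSpan ℝ (Set.range x) = ⊤ := by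
    rw [hx.affineSpan_eq_top_iff_card_eq_finrank_add_one, finrank_euclideanSpace_fin,
      Fintype.card_fin]
  let B : AffineBasis (Fin (n + 1)) ℝ (EuclideanSpace ℝ (Fin n)) := ⟨x, hx, hspan⟩
  have hcard : (Fintype.card (Fin (n + 1)) : ℝ) = n + 1 := by simp
  exact ⟨hcard ▸ hf.map_smul_sum_le_setAverage_convexHull (B := B) hint,
    hcard ▸ hf.setAverage_convexHull_le (B := B) hint⟩
end

section
/- Let C be a cube in ℝ³, A a vertex of C, and S the union of the three faces of C not containing A. If f : C → ℝ is convex, then Avg(f, C) ≤ (1/4)·f(A) + (3/4)·Avg(f, S), where Avg(f, S) is the mean of f over S with respect to 2-dimensional surface measure. -/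
/-!
Split the cube `[0,1]^(n+1)` into the pyramids `{x | ∀ j, x j ≤ x i}` with apex `0` and base the
far face `x i = 1`. The map `x ↦ x i • update x i 1` parametrizes pyramid `i` by the cube with
Jacobian `x i ^ n`, and convexity along the segment from `0` bounds `f` at that point by
`x i * f (update x i 1) + (1 - x i) * f 0`. Integrating gives
`∫ pyramid i, f ≤ f 0 / ((n + 1) (n + 2)) + (∫ face i, f) / (n + 2)`, and summing over `i` gives
`⨍ cube, f ≤ f 0 / (n + 2) + (n + 1) / (n + 2) * ⨍ far faces, f`. On the surface side each far
face is an isometric copy of the unit `n`-cube, on which `μH[n]` is a fixed multiple of Lebesgue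
measure; the multiple cancels in the average.
-/

open MeasureTheory Set Function

theorem Isometry.restrict_hausdorffMeasure_image {X Y : Type*} [MetricSpace X] [MeasurableSpace X]
    [BorelSpace X] [MetricSpace Y] [CompleteSpace Y] [MeasurableSpace Y] [BorelSpace Y]
    {φ : Y → X} (hφ : Isometry φ) {d : ℝ} (hd : 0 ≤ d) (s : Set Y) :
    (μH[d] : Measure X).restrict (φ '' s) = (μH[d].restrict s).map φ := by
  have hemb := hφ.isClosedEmbedding.measurableEmbedding
  calc (μH[d] : Measure X).restrict (φ '' s)
      = ((μH[d] : Measure X).restrict (range φ)).restrict (φ '' s) :=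
        (Measure.restrict_restrict_of_subset (image_subset_range φ s)).symm
    _ = (μH[d].restrict s).map φ := by
        rw [← hφ.map_hausdorffMeasure (Or.inl hd), hemb.restrict_map, hφ.injective.preimage_image]

namespace UnitCube

section Pyramid

variable {ι : Type*} [Fintype ι]

def pyramid (i : ι) : Set (ι → ℝ) := {x | x ∈ Icc 0 1 ∧ ∀ j, x j ≤ x i}

lemma measurableSet_pyramid (i : ι) : MeasurableSet (pyramid i) := by
  have : pyramid i = Icc 0 1 ∩ ⋂ j, {x : ι → ℝ | x j ≤ x i} := by ext; simp [pyramid]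
  rw [this]
  exact measurableSet_Icc.inter <| .iInter fun j ↦ measurableSet_le (measurable_pi_apply j)
    (measurable_pi_apply i)

lemma iUnion_pyramid [Nonempty ι] : ⋃ i, pyramid i = Icc (0 : ι → ℝ) 1 := by
  refine Subset.antisymm (iUnion_subset fun i x hx ↦ hx.1) fun x hx ↦ ?_
  obtain ⟨i, -, hi⟩ := Finset.univ.exists_max_image x Finset.univ_nonempty
  exact mem_iUnion.2 ⟨i, hx, fun j ↦ hi j (Finset.mem_univ j)⟩

lemma volume_pyramid_inter_pyramid {i j : ι} (hij : i ≠ j) :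
    volume (pyramid i ∩ pyramid j) = 0 := by
  classical
  let N := LinearMap.ker ((LinearMap.proj i : (ι → ℝ) →ₗ[ℝ] ℝ) - LinearMap.proj j)
  have hN : N ≠ ⊤ := fun h ↦ by
    have : Pi.single i (1 : ℝ) ∈ N := h ▸ Submodule.mem_top
    simp [N, hij.symm] at this
  refine measure_mono_null (fun x hx ↦ ?_) (Measure.addHaar_submodule _ N hN)
  have : x i = x j := le_antisymm (hx.2.2 i) (hx.1.2 j)
  simp [N, this]

lemma volume_hyperplane (i : ι) (c : ℝ) : volume {x : ι → ℝ | x i = c} = 0 :=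
  Measure.pi_hyperplane (fun _ ↦ (volume : Measure ℝ)) i c

lemma inter_pos_ae_eq {s : Set (ι → ℝ)} {i : ι} (hs : s ⊆ {x | 0 ≤ x i}) :
    (s ∩ {x | 0 < x i} : Set (ι → ℝ)) =ᵐ[volume] s := by
  refine (inter_subset_left.eventuallyLE).antisymm (ae_le_set.2 ?_)
  refine measure_mono_null (fun x hx ↦ ?_) (volume_hyperplane i 0)
  exact (hs hx.1).antisymm' (not_lt.1 fun h ↦ hx.2 ⟨hx.1, h⟩)

lemma setIntegral_Icc_const (c : ℝ) : ∫ _ in Icc (0 : ι → ℝ) 1, c = c := by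
  simp [measureReal_def, Real.volume_Icc_pi]

end Pyramid

lemma update_one_mem_Icc {ι : Type*} [DecidableEq ι] {x : ι → ℝ} (hx : x ∈ Icc 0 1) (i : ι) :
    update x i 1 ∈ Icc (0 : ι → ℝ) 1 := by
  rw [← pi_univ_Icc] at hx ⊢
  exact (update_mem_pi_iff_of_mem hx).2 fun _ ↦ right_mem_Icc.2 zero_le_one

variable {n : ℕ}

/-- `update x i 1` is the point of the far face `x i = 1` above `x`; `coneMap i` moves it to
parameter `x i` on the segment from the vertex `0`. -/
def coneMap (i : Fin (n + 1)) (x : Fin (n + 1) → ℝ) : Fin (n + 1) → ℝ := x i • update x i 1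

def coneMapDeriv (i : Fin (n + 1)) (x : Fin (n + 1) → ℝ) :
    (Fin (n + 1) → ℝ) →L[ℝ] Fin (n + 1) → ℝ :=
  x i • (ContinuousLinearMap.id ℝ _ - (ContinuousLinearMap.proj i).smulRight (Pi.single i 1)) +
    (ContinuousLinearMap.proj i).smulRight (update x i 1)

lemma coneMap_apply (i : Fin (n + 1)) (x : Fin (n + 1) → ℝ) (j : Fin (n + 1)) :
    coneMap i x j = if j = i then x i else x i * x j := by
  rcases eq_or_ne j i with rfl | hj <;> simp [coneMap, *]

lemma coneMapDeriv_apply (i : Fin (n + 1)) (x h : Fin (n + 1) → ℝ) (j : Fin (n + 1)) :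
    coneMapDeriv i x h j = if j = i then h i else x i * h j + h i * x j := by
  rcases eq_or_ne j i with rfl | hj <;> simp [coneMapDeriv, *]

lemma hasFDerivAt_coneMap (i : Fin (n + 1)) (x : Fin (n + 1) → ℝ) :
    HasFDerivAt (coneMap i) (coneMapDeriv i x) x := by
  set P := ContinuousLinearMap.id ℝ (Fin (n + 1) → ℝ) -
    (ContinuousLinearMap.proj i).smulRight (Pi.single i 1)
  have hupd : (fun y : Fin (n + 1) → ℝ ↦ update y i 1) = fun y ↦ P y + Pi.single i 1 := by
    ext y j
    rcases eq_or_ne j i with rfl | hj <;> simp [P, *]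
  have hc : HasFDerivAt (fun y : Fin (n + 1) → ℝ ↦ y i) (ContinuousLinearMap.proj i) x :=
    hasFDerivAt_apply (𝕜 := ℝ) i x
  have hu : HasFDerivAt (fun y : Fin (n + 1) → ℝ ↦ update y i 1) P x := by
    rw [hupd]
    exact P.hasFDerivAt.add_const _
  exact hc.smul hu

lemma det_coneMapDeriv (i : Fin (n + 1)) (x : Fin (n + 1) → ℝ) :
    (coneMapDeriv i x).det = x i ^ n := by
  set M := LinearMap.toMatrix' (coneMapDeriv i x : (Fin (n + 1) → ℝ) →ₗ[ℝ] Fin (n + 1) → ℝ)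
  -- Row `i` of `M` is the `i`-th unit row and the complementary minor is `x i • 1`.
  have hminor : M.submatrix i.succAbove i.succAbove = Matrix.diagonal fun _ ↦ x i := by
    ext a b
    simp [M, LinearMap.toMatrix'_apply, coneMapDeriv_apply, Matrix.diagonal_apply, Pi.single_apply]
  rw [ContinuousLinearMap.det, ← LinearMap.det_toMatrix', Matrix.det_succ_row _ i,
    Finset.sum_eq_single i
      (fun k _ hk ↦ by simp [LinearMap.toMatrix'_apply, coneMapDeriv_apply, hk]) (by simp)]
  simp [hminor, M, LinearMap.toMatrix'_apply, coneMapDeriv_apply]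

lemma injOn_coneMap (i : Fin (n + 1)) : InjOn (coneMap i) {x | 0 < x i} := by
  intro x _ y hy hxy
  have hi : x i = y i := by simpa [coneMap_apply] using congrFun hxy i
  ext j
  rcases eq_or_ne j i with rfl | hj
  · exact hi
  · have := congrFun hxy j
    simp only [coneMap_apply, if_neg hj, hi] at this
    exact mul_left_cancel₀ (ne_of_gt hy) this

lemma coneMap_mem_pyramid {x : Fin (n + 1) → ℝ} (hx : x ∈ Icc 0 1) (i : Fin (n + 1)) :
    coneMap i x ∈ pyramid i := by
  have hu := update_one_mem_Icc hx i
  have hcone j : coneMap i x j = x i * update x i 1 j := rfl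
  have hle j : coneMap i x j ≤ x i := hcone j ▸ mul_le_of_le_one_right (hx.1 i) (hu.2 j)
  refine ⟨⟨fun j ↦ hcone j ▸ mul_nonneg (hx.1 i) (hu.1 j), fun j ↦ (hle j).trans (hx.2 i)⟩,
    fun j ↦ ?_⟩
  simpa [coneMap_apply] using hle j

lemma image_coneMap (i : Fin (n + 1)) :
    coneMap i '' (Icc 0 1 ∩ {x | 0 < x i}) = pyramid i ∩ {x | 0 < x i} := by
  refine Subset.antisymm ?_ fun y ⟨⟨⟨hy0, hy1⟩, hymax⟩, (hyi : 0 < y i)⟩ ↦ ?_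
  · rintro _ ⟨x, ⟨hx, hxi⟩, rfl⟩
    exact ⟨coneMap_mem_pyramid hx i, by simpa [coneMap_apply] using hxi⟩
  refine ⟨update (y / fun _ ↦ y i) i (y i), ⟨⟨fun j ↦ ?_, fun j ↦ ?_⟩, by simpa⟩, ?_⟩
  · rcases eq_or_ne j i with rfl | hj
    · simpa using hy0 j
    · simpa [hj] using div_nonneg (hy0 j) hyi.le
  · rcases eq_or_ne j i with rfl | hj
    · simpa using hy1 j
    · simpa [hj] using (div_le_one hyi).2 (hymax j)
  · ext j
    rcases eq_or_ne j i with rfl | hj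
    · simp [coneMap_apply]
    · simp [coneMap_apply, hj, mul_div_cancel₀ _ hyi.ne']

lemma setIntegral_Icc_mul_removeNth (i : Fin (n + 1)) (φ : ℝ → ℝ) (ψ : (Fin n → ℝ) → ℝ) :
    ∫ x in Icc (0 : Fin (n + 1) → ℝ) 1, φ (x i) * ψ (i.removeNth x) =
      (∫ t in Icc (0 : ℝ) 1, φ t) * ∫ v in Icc (0 : Fin n → ℝ) 1, ψ v := by
  have hIcc : Icc (0 : Fin (n + 1) → ℝ) 1 =
      MeasurableEquiv.piFinSuccAbove (fun _ ↦ ℝ) i ⁻¹' Icc 0 1 ×ˢ Icc 0 1 := by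
    ext x
    simp [MeasurableEquiv.piFinSuccAbove, Fin.insertNthEquiv, Pi.le_def, Fin.forall_iff_succAbove i,
      Fin.removeNth, and_and_and_comm]
  rw [hIcc, ← setIntegral_prod_mul, ← Measure.volume_eq_prod]
  exact (volume_preserving_piFinSuccAbove (fun _ ↦ ℝ) i).setIntegral_preimage_emb
    (MeasurableEquiv.measurableEmbedding _) (fun p ↦ φ p.1 * ψ p.2) _

lemma integral_Icc_pow (k : ℕ) : ∫ t in Icc (0 : ℝ) 1, t ^ k = ((k : ℝ) + 1)⁻¹ := by
  rw [integral_Icc_eq_integral_Ioc, ← intervalIntegral.integral_of_le zero_le_one, integral_pow]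
  simp

lemma integral_Icc_pow_mul_one_sub (k : ℕ) :
    ∫ t in Icc (0 : ℝ) 1, t ^ k * (1 - t) = (((k : ℝ) + 1) * (k + 2))⁻¹ := by
  simp_rw [mul_one_sub, ← pow_succ]
  rw [integral_sub (continuous_pow k).integrableOn_Icc (continuous_pow _).integrableOn_Icc,
    integral_Icc_pow, integral_Icc_pow]
  push_cast
  field_simp
  ring

def coneMajorant (g : (Fin (n + 1) → ℝ) → ℝ) (i : Fin (n + 1)) (x : Fin (n + 1) → ℝ) : ℝ :=
  x i ^ (n + 1) * g (update x i 1) + x i ^ n * (1 - x i) * g 0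

lemma abs_det_smul_le_coneMajorant {g : (Fin (n + 1) → ℝ) → ℝ} (hg : ConvexOn ℝ (Icc 0 1) g)
    (i : Fin (n + 1)) {x : Fin (n + 1) → ℝ} (hx : x ∈ Icc 0 1) :
    |(coneMapDeriv i x).det| • g (coneMap i x) ≤ coneMajorant g i x := by
  have hconv : g (coneMap i x) ≤ x i * g (update x i 1) + (1 - x i) * g 0 := by
    simpa [coneMap] using hg.2 (update_one_mem_Icc hx i) (left_mem_Icc.2 zero_le_one) (hx.1 i)
      (sub_nonneg.2 (hx.2 i)) (add_sub_cancel _ _)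
  rw [det_coneMapDeriv, abs_of_nonneg (pow_nonneg (hx.1 i) n), smul_eq_mul, coneMajorant]
  exact (mul_le_mul_of_nonneg_left hconv (pow_nonneg (hx.1 i) n)).trans_eq (by ring)

lemma continuousOn_comp_update_one {g : (Fin (n + 1) → ℝ) → ℝ} (hgc : ContinuousOn g (Icc 0 1))
    (i : Fin (n + 1)) : ContinuousOn (fun x ↦ g (update x i 1)) (Icc 0 1) :=
  hgc.comp (continuous_id.update i continuous_const).continuousOn
    fun _ hx ↦ update_one_mem_Icc hx i

lemma setIntegral_coneMajorant {g : (Fin (n + 1) → ℝ) → ℝ} (hgc : ContinuousOn g (Icc 0 1))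
    (i : Fin (n + 1)) :
    ∫ x in Icc 0 1, coneMajorant g i x =
      (((n : ℝ) + 1) * (n + 2))⁻¹ * g 0 +
        ((n : ℝ) + 2)⁻¹ * ∫ v in Icc 0 1, g (i.insertNth 1 v) := by
  have hint₁ : IntegrableOn (fun x ↦ x i ^ (n + 1) * g (update x i 1)) (Icc 0 1) :=
    (((continuous_apply i).pow _).continuousOn.mul (continuousOn_comp_update_one hgc i))
      |>.integrableOn_compact isCompact_Icc
  have hint₂ : IntegrableOn (fun x : Fin (n + 1) → ℝ ↦ x i ^ n * (1 - x i) * g 0) (Icc 0 1) :=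
    Continuous.integrableOn_Icc (by fun_prop)
  have h₁ := setIntegral_Icc_mul_removeNth i (· ^ (n + 1)) (fun v ↦ g (i.insertNth 1 v))
  have h₂ := setIntegral_Icc_mul_removeNth i (fun t ↦ t ^ n * (1 - t)) (fun _ ↦ g 0)
  simp only [Fin.insertNth_removeNth] at h₁ h₂
  simp only [coneMajorant]
  rw [integral_add hint₁ hint₂, h₁, h₂, setIntegral_Icc_const, integral_Icc_pow,
    integral_Icc_pow_mul_one_sub]
  push_cast
  ring

lemma setIntegral_pyramid_le {g : (Fin (n + 1) → ℝ) → ℝ} (hg : ConvexOn ℝ (Icc 0 1) g)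
    (hgc : ContinuousOn g (Icc 0 1)) (i : Fin (n + 1)) :
    ∫ x in pyramid i, g x ≤
      (((n : ℝ) + 1) * (n + 2))⁻¹ * g 0 +
        ((n : ℝ) + 2)⁻¹ * ∫ v in Icc 0 1, g (i.insertNth 1 v) := by
  set s : Set (Fin (n + 1) → ℝ) := Icc 0 1 ∩ {x | 0 < x i}
  have hs : MeasurableSet s :=
    measurableSet_Icc.inter (measurableSet_lt measurable_const (measurable_pi_apply i))
  have hderiv (x) (_ : x ∈ s) : HasFDerivWithinAt (coneMap i) (coneMapDeriv i x) s x :=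
    (hasFDerivAt_coneMap i x).hasFDerivWithinAt
  have hinj : InjOn (coneMap i) s := (injOn_coneMap i).mono inter_subset_right
  have himage : coneMap i '' s ⊆ Icc 0 1 := image_coneMap i ▸ fun x hx ↦ hx.1.1
  have hint_cone : IntegrableOn (fun x ↦ |(coneMapDeriv i x).det| • g (coneMap i x)) s :=
    (integrableOn_image_iff_integrableOn_abs_det_fderiv_smul volume hs hderiv hinj g).1
      ((hgc.integrableOn_compact isCompact_Icc).mono_set himage)
  have hint_major : IntegrableOn (coneMajorant g i) (Icc 0 1) :=
    ((((continuous_apply i).pow _).continuousOn.mul (continuousOn_comp_update_one hgc i)).add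
      (Continuous.continuousOn (by fun_prop))).integrableOn_compact isCompact_Icc
  calc ∫ x in pyramid i, g x = ∫ x in coneMap i '' s, g x := by
        rw [image_coneMap]; exact setIntegral_congr_set (inter_pos_ae_eq fun x hx ↦ hx.1.1 i).symm
    _ = ∫ x in s, |(coneMapDeriv i x).det| • g (coneMap i x) :=
        integral_image_eq_integral_abs_det_fderiv_smul volume hs hderiv hinj g
    _ ≤ ∫ x in s, coneMajorant g i x :=
        setIntegral_mono_on hint_cone (hint_major.mono_set inter_subset_left) hs
          fun x hx ↦ abs_det_smul_le_coneMajorant hg i hx.1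
    _ = ∫ x in Icc 0 1, coneMajorant g i x :=
        setIntegral_congr_set (inter_pos_ae_eq fun x hx ↦ hx.1 i)
    _ = _ := setIntegral_coneMajorant hgc i

theorem setIntegral_Icc_le_of_convexOn {g : (Fin (n + 1) → ℝ) → ℝ} (hg : ConvexOn ℝ (Icc 0 1) g)
    (hgc : ContinuousOn g (Icc 0 1)) :
    ∫ x in Icc 0 1, g x ≤
      ((n : ℝ) + 2)⁻¹ * (g 0 + ∑ i : Fin (n + 1), ∫ v in Icc 0 1, g (i.insertNth 1 v)) := by
  rw [← iUnion_pyramid, integral_iUnion_ae (fun i ↦ (measurableSet_pyramid i).nullMeasurableSet)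
    (fun i j hij ↦ volume_pyramid_inter_pyramid hij)
    (iUnion_pyramid (ι := Fin (n + 1)) ▸ hgc.integrableOn_compact isCompact_Icc), tsum_fintype]
  refine (Finset.sum_le_sum fun i _ ↦ setIntegral_pyramid_le hg hgc i).trans_eq ?_
  rw [Finset.sum_add_distrib, Finset.sum_const, Finset.card_univ, Fintype.card_fin,
    nsmul_eq_mul, ← Finset.mul_sum]
  generalize ∑ i : Fin (n + 1), ∫ v in Icc 0 1, g (i.insertNth 1 v) = S
  push_cast
  field_simp

noncomputable def hausdorffScale (n : ℕ) : NNReal :=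
  Measure.addHaarScalarFactor (μH[n] : Measure (EuclideanSpace ℝ (Fin n))) volume

lemma hausdorffMeasure_eq_smul_volume (n : ℕ) :
    (μH[n] : Measure (EuclideanSpace ℝ (Fin n))) = hausdorffScale n • volume :=
  Measure.isAddLeftInvariant_eq_smul _ _

lemma hausdorffScale_pos (n : ℕ) : 0 < hausdorffScale n :=
  Measure.addHaarScalarFactor_pos_of_isAddHaarMeasure _ _

section Isometry

variable {X : Type*} [MetricSpace X] [MeasurableSpace X] [BorelSpace X]
  {φ : EuclideanSpace ℝ (Fin n) → X}

lemma hausdorffMeasure_image_of_isometry (hφ : Isometry φ) (s : Set (EuclideanSpace ℝ (Fin n))) :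
    μH[n] (φ '' s) = hausdorffScale n * volume s := by
  rw [hφ.hausdorffMeasure_image (Or.inl n.cast_nonneg), hausdorffMeasure_eq_smul_volume]
  rfl

lemma setIntegral_image_of_isometry (hφ : Isometry φ) (s : Set (EuclideanSpace ℝ (Fin n)))
    (g : X → ℝ) :
    ∫ x in φ '' s, g x ∂μH[n] = hausdorffScale n * ∫ y in s, g (φ y) := by
  rw [hφ.restrict_hausdorffMeasure_image n.cast_nonneg,
    hφ.isClosedEmbedding.measurableEmbedding.integral_map, hausdorffMeasure_eq_smul_volume,
    Measure.restrict_smul, integral_smul_nnreal_measure]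
  rfl

lemma integrableOn_image_of_isometry (hφ : Isometry φ) {s : Set (EuclideanSpace ℝ (Fin n))}
    {g : X → ℝ} (hg : IntegrableOn (g ∘ φ) s) : IntegrableOn g (φ '' s) μH[n] := by
  rw [IntegrableOn, hφ.restrict_hausdorffMeasure_image n.cast_nonneg,
    hφ.isClosedEmbedding.measurableEmbedding.integrable_map_iff, hausdorffMeasure_eq_smul_volume,
    Measure.restrict_smul]
  exact hg.smul_measure_nnreal

end Isometry

def unitCube (n : ℕ) : Set (EuclideanSpace ℝ (Fin n)) := {x | ∀ i, x i ∈ Icc 0 1}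

lemma unitCube_eq_preimage (n : ℕ) : unitCube n = WithLp.ofLp ⁻¹' Icc 0 1 := by
  ext x
  simp [unitCube, Pi.le_def, forall_and]

lemma isCompact_unitCube (n : ℕ) : IsCompact (unitCube n) := by
  rw [unitCube_eq_preimage]
  exact (PiLp.homeomorph 2 _).isCompact_preimage.2 isCompact_Icc

lemma volume_unitCube (n : ℕ) : volume (unitCube n) = 1 := by
  rw [unitCube_eq_preimage, (PiLp.volume_preserving_ofLp _).measure_preimage
    measurableSet_Icc.nullMeasurableSet, Real.volume_Icc_pi]
  simp

lemma setIntegral_unitCube (g : EuclideanSpace ℝ (Fin n) → ℝ) :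
    ∫ x in unitCube n, g x = ∫ v in Icc 0 1, g (WithLp.toLp 2 v) := by
  rw [unitCube_eq_preimage]
  exact (PiLp.volume_preserving_ofLp _).setIntegral_preimage_emb
    (MeasurableEquiv.toLp 2 _).symm.measurableEmbedding (fun v ↦ g (WithLp.toLp 2 v)) _

lemma setAverage_unitCube (g : EuclideanSpace ℝ (Fin n) → ℝ) :
    ⨍ x in unitCube n, g x = ∫ v in Icc 0 1, g (WithLp.toLp 2 v) := by
  rw [setAverage_eq, measureReal_def, volume_unitCube, ENNReal.toReal_one, inv_one, one_smul,
    setIntegral_unitCube]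

lemma convexOn_comp_toLp {g : EuclideanSpace ℝ (Fin n) → ℝ} (hg : ConvexOn ℝ (unitCube n) g) :
    ConvexOn ℝ (Icc 0 1) fun v ↦ g (WithLp.toLp 2 v) := by
  have := hg.comp_linearMap (WithLp.linearEquiv 2 ℝ (Fin n → ℝ)).symm.toLinearMap
  rwa [unitCube_eq_preimage] at this

def farFace (i : Fin n) : Set (EuclideanSpace ℝ (Fin n)) := {x | x ∈ unitCube n ∧ x i = 1}

def farBoundary (n : ℕ) : Set (EuclideanSpace ℝ (Fin n)) :=
  {x | (∀ i, x i ∈ Icc 0 1) ∧ ∃ i, x i = 1}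

lemma farBoundary_eq_iUnion (n : ℕ) : farBoundary n = ⋃ i, farFace i := by
  ext x
  simp [farBoundary, farFace, unitCube]

def faceEmb (i : Fin (n + 1)) (y : EuclideanSpace ℝ (Fin n)) : EuclideanSpace ℝ (Fin (n + 1)) :=
  WithLp.toLp 2 (i.insertNth 1 (WithLp.ofLp y))

@[simp] lemma faceEmb_apply_self (i : Fin (n + 1)) (y : EuclideanSpace ℝ (Fin n)) :
    faceEmb i y i = 1 := by
  simp [faceEmb]

@[simp] lemma faceEmb_apply_succAbove (i : Fin (n + 1)) (y : EuclideanSpace ℝ (Fin n))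
    (k : Fin n) : faceEmb i y (i.succAbove k) = y k := by
  simp [faceEmb]

lemma isometry_faceEmb (i : Fin (n + 1)) : Isometry (faceEmb i) :=
  Isometry.of_dist_eq fun y z ↦ by simp [EuclideanSpace.dist_eq, Fin.sum_univ_succAbove _ i]

lemma faceEmb_image_unitCube (i : Fin (n + 1)) : faceEmb i '' unitCube n = farFace i := by
  ext x
  constructor
  · rintro ⟨y, hy, rfl⟩
    refine ⟨fun j ↦ ?_, faceEmb_apply_self i y⟩
    rcases Fin.eq_self_or_eq_succAbove i j with rfl | ⟨k, rfl⟩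
    · simp
    · simpa using hy k
  · rintro ⟨hx, hxi⟩
    refine ⟨WithLp.toLp 2 (i.removeNth (WithLp.ofLp x)), fun k ↦ hx _, ?_⟩
    ext j
    rcases Fin.eq_self_or_eq_succAbove i j with rfl | ⟨k, rfl⟩
    · simp [hxi]
    · simp [Fin.removeNth]

lemma measurableSet_farFace (i : Fin n) : MeasurableSet (farFace i) :=
  (isCompact_unitCube n).measurableSet.inter
    (measurableSet_eq_fun (PiLp.continuous_apply 2 _ i).measurable measurable_const)

lemma hausdorffMeasure_farFace (i : Fin (n + 1)) :
    μH[n] (farFace i) = hausdorffScale n := by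
  rw [← faceEmb_image_unitCube, hausdorffMeasure_image_of_isometry (isometry_faceEmb i),
    volume_unitCube, mul_one]

lemma hausdorffMeasure_farFace_inter_farFace {i j : Fin (n + 1)} (hij : i ≠ j) :
    μH[n] (farFace i ∩ farFace j) = 0 := by
  obtain ⟨k, rfl⟩ := Fin.exists_succAbove_eq hij.symm
  have hsub : farFace i ∩ farFace (i.succAbove k) ⊆ faceEmb i '' {y | y k = 1} := by
    rintro x ⟨hx, hxk⟩
    obtain ⟨y, -, rfl⟩ := (faceEmb_image_unitCube i).symm ▸ hx
    exact ⟨y, by simpa using hxk.2, rfl⟩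
  refine measure_mono_null hsub ?_
  rw [hausdorffMeasure_image_of_isometry (isometry_faceEmb i)]
  have : {y : EuclideanSpace ℝ (Fin n) | y k = 1} = WithLp.ofLp ⁻¹' {v | v k = 1} := rfl
  rw [this, (PiLp.volume_preserving_ofLp _).measure_preimage
    (measurableSet_eq_fun (measurable_pi_apply k) measurable_const).nullMeasurableSet,
    volume_hyperplane, mul_zero]

lemma setIntegral_farFace (i : Fin (n + 1)) (g : EuclideanSpace ℝ (Fin (n + 1)) → ℝ) :
    ∫ x in farFace i, g x ∂μH[n] =
      hausdorffScale n * ∫ v in Icc 0 1, g (WithLp.toLp 2 (i.insertNth 1 v)) := by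
  rw [← faceEmb_image_unitCube, setIntegral_image_of_isometry (isometry_faceEmb i),
    setIntegral_unitCube]
  rfl

lemma integrableOn_farFace {g : EuclideanSpace ℝ (Fin (n + 1)) → ℝ}
    (hgc : ContinuousOn g (unitCube (n + 1))) (i : Fin (n + 1)) :
    IntegrableOn g (farFace i) μH[n] := by
  rw [← faceEmb_image_unitCube]
  refine integrableOn_image_of_isometry (isometry_faceEmb i) ?_
  refine (hgc.comp (isometry_faceEmb i).continuous.continuousOn ?_).integrableOn_compact
    (isCompact_unitCube n)
  exact fun y hy ↦ ((faceEmb_image_unitCube i).subset (mem_image_of_mem _ hy)).1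

lemma setAverage_farBoundary {g : EuclideanSpace ℝ (Fin (n + 1)) → ℝ}
    (hgc : ContinuousOn g (unitCube (n + 1))) :
    ⨍ x in farBoundary (n + 1), g x ∂μH[n] =
      ((n : ℝ) + 1)⁻¹ * ∑ i : Fin (n + 1), ∫ v in Icc 0 1, g (WithLp.toLp 2 (i.insertNth 1 v)) := by
  have hnull : Pairwise (AEDisjoint μH[n] on fun i : Fin (n + 1) ↦ farFace i) :=
    fun i j hij ↦ hausdorffMeasure_farFace_inter_farFace hij
  have hmeas (i : Fin (n + 1)) : NullMeasurableSet (farFace i) μH[n] :=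
    (measurableSet_farFace i).nullMeasurableSet
  rw [setAverage_eq, farBoundary_eq_iUnion, measureReal_def, measure_iUnion₀ hnull hmeas,
    integral_iUnion_ae hmeas hnull (integrableOn_finite_iUnion.2 (integrableOn_farFace hgc)),
    tsum_fintype, tsum_fintype]
  simp only [hausdorffMeasure_farFace, setIntegral_farFace, ← Finset.mul_sum, Finset.sum_const,
    Finset.card_univ, Fintype.card_fin, nsmul_eq_mul, smul_eq_mul, ENNReal.toReal_mul,
    ENNReal.toReal_natCast, ENNReal.coe_toReal]
  have := (hausdorffScale_pos n).ne'
  push_cast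
  field_simp

theorem setAverage_unitCube_le {f : EuclideanSpace ℝ (Fin (n + 1)) → ℝ}
    (hf : ConvexOn ℝ (unitCube (n + 1)) f) (hfc : ContinuousOn f (unitCube (n + 1))) :
    ⨍ x in unitCube (n + 1), f x ≤
      ((n : ℝ) + 2)⁻¹ * f 0 + ((n + 1) / (n + 2)) * ⨍ x in farBoundary (n + 1), f x ∂μH[n] := by
  have hgc : ContinuousOn (fun v ↦ f (WithLp.toLp 2 v)) (Icc 0 1) :=
    hfc.comp (PiLp.continuous_toLp 2 _).continuousOn fun v hv ↦ by
      rwa [unitCube_eq_preimage]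
  rw [setAverage_unitCube, setAverage_farBoundary hfc]
  refine (setIntegral_Icc_le_of_convexOn (convexOn_comp_toLp hf) hgc).trans_eq ?_
  simp only [WithLp.toLp_zero]
  field_simp

end UnitCube

theorem cube_vertex_far_faces_bound (f : EuclideanSpace ℝ (Fin 3) → ℝ)
    (hf : ConvexOn ℝ {x : EuclideanSpace ℝ (Fin 3) | ∀ i, x i ∈ Set.Icc (0 : ℝ) 1} f)
    (hfc : ContinuousOn f
      {x : EuclideanSpace ℝ (Fin 3) | ∀ i, x i ∈ Set.Icc (0 : ℝ) 1}) :
    ⨍ y in {x : EuclideanSpace ℝ (Fin 3) | ∀ i, x i ∈ Set.Icc (0 : ℝ) 1}, f y ≤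
      (1 / 4) * f 0 +
        (3 / 4) *
          ⨍ y in {x : EuclideanSpace ℝ (Fin 3) |
            (∀ i, x i ∈ Set.Icc (0 : ℝ) 1) ∧ ∃ i, x i = 1}, f y ∂μH[2] := by
  have := UnitCube.setAverage_unitCube_le (n := 2) hf hfc
  norm_num at this
  exact this
end
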